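/- Let θ⁰ ∈ (−π/2, π/2] with complementary high frequency θ¹, and let ψ : ℤ → ℂ be the coarse-grid mode ψ(j) = exp(i·(2θ⁰)·j). Then the linear prolongation satisfies I_{2h}^h ψ = (1/2)(1 + cos θ⁰)·φ_{θ⁰} + (1/2)(1 + cos θ¹)·φ_{θ¹}; that is, prolongation of a coarse mode produces the pair of 2h-harmonics with coefficients given by the prolongation symbol Ĩ_{2h}^h(θ) = (1/2)(1 + cos θ). -/

import Mathlib

/-!
Write `φ_θ` for the Fourier mode. The high frequency `θ¹ = θ⁰ ± π` satisfies
`φ_{θ¹}(j) = (-1)^j φ_{θ⁰}(j)` and `cos θ¹ = -cos θ⁰`, so the right-hand side equals `φ_{θ⁰}(j)` at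
even `j` and `cos θ⁰ · φ_{θ⁰}(j)` at odd `j`. At `j = 2k` the prolongation copies `ψ(k) = φ_{θ⁰}(2k)`;
at `j = 2k + 1` it averages `φ_{θ⁰}(j - 1)` and `φ_{θ⁰}(j + 1)`, which is `cos θ⁰ · φ_{θ⁰}(j)`.
-/

/-- The Fourier mode `φ_θ : ℤ → ℂ`, `φ_θ(j) = exp(iθj)`. -/
noncomputable def fourierMode (θ : ℝ) : ℤ → ℂ := fun j => Complex.exp (Complex.I * θ * j)

open Complex
open scoped Real

theorem fourierMode_add (θ η : ℝ) (j : ℤ) :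
    fourierMode (θ + η) j = fourierMode θ j * fourierMode η j := by
  simp only [fourierMode, ← Complex.exp_add]
  push_cast
  ring_nf

theorem fourierMode_apply_add (θ : ℝ) (j l : ℤ) :
    fourierMode θ (j + l) = fourierMode θ j * fourierMode θ l := by
  simp only [fourierMode, ← Complex.exp_add]
  push_cast
  ring_nf

theorem fourierMode_apply_two_mul (θ : ℝ) (k : ℤ) :
    fourierMode θ (2 * k) = fourierMode (2 * θ) k := by
  simp only [fourierMode]
  push_cast
  ring_nf

theorem fourierMode_pi (j : ℤ) : fourierMode π j = (-1) ^ j := by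
  rw [fourierMode, show I * (π : ℂ) * j = j * (π * I) by ring, exp_int_mul, exp_pi_mul_I]

theorem fourierMode_neg_pi (j : ℤ) : fourierMode (-π) j = (-1) ^ j := by
  rw [fourierMode, show I * ((-π : ℝ) : ℂ) * j = j * -(π * I) by push_cast; ring, exp_int_mul,
    exp_neg_pi_mul_I]

theorem fourierMode_sub_one_add_add_one (θ : ℝ) (j : ℤ) :
    fourierMode θ (j - 1) + fourierMode θ (j + 1) = 2 * cos θ * fourierMode θ j := by
  rw [sub_eq_add_neg, fourierMode_apply_add, fourierMode_apply_add]
  simp only [fourierMode, cos, Int.cast_one, Int.cast_neg]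
  ring_nf

theorem prolongation_fourierMode_two_mul {P : (ℤ → ℂ) → (ℤ → ℂ)}
    (hP : ∀ (v : ℤ → ℂ) (j : ℤ), P v (2 * j) = v j ∧ P v (2 * j + 1) = (v j + v (j + 1)) / 2)
    {θ θ' : ℝ} (hmode : ∀ j, fourierMode θ' j = (-1) ^ j * fourierMode θ j)
    (hcos : cos θ' = -cos θ) (j : ℤ) :
    P (fourierMode (2 * θ)) j = (1 / 2 : ℂ) * (1 + cos θ) * fourierMode θ j
        + (1 / 2 : ℂ) * (1 + cos θ') * fourierMode θ' j := by
  rw [hcos, hmode]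
  obtain ⟨k, rfl | rfl⟩ := Int.even_or_odd' j
  · rw [(hP _ k).1, ← fourierMode_apply_two_mul, (even_two_mul k).neg_one_zpow]
    ring
  · have hneighbors := fourierMode_sub_one_add_add_one θ (2 * k + 1)
    rw [show 2 * k + 1 - 1 = 2 * k by ring, show 2 * k + 1 + 1 = 2 * (k + 1) by ring] at hneighbors
    rw [(hP _ k).2, ← fourierMode_apply_two_mul, ← fourierMode_apply_two_mul,
      (odd_two_mul_add_one k).neg_one_zpow]
    linear_combination hneighbors / 2

theorem prolongation_of_coarse_mode_general (θ0 θ1 : ℝ)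
    (hθ1 : θ1 = if 0 < θ0 then θ0 - Real.pi else θ0 + Real.pi)
    (P : (ℤ → ℂ) → (ℤ → ℂ))
    (hP : ∀ (v : ℤ → ℂ) (j : ℤ),
      P v (2 * j) = v j ∧ P v (2 * j + 1) = (v j + v (j + 1)) / 2)
    (ψ : ℤ → ℂ) (hψ : ψ = fun j : ℤ => Complex.exp (Complex.I * (2 * θ0) * (j : ℂ))) :
    ∀ j : ℤ, P ψ j = (1 / 2 : ℂ) * (1 + Complex.cos θ0) * fourierMode θ0 j
        + (1 / 2 : ℂ) * (1 + Complex.cos θ1) * fourierMode θ1 j := by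
  have hψ_mode : ψ = fourierMode (2 * θ0) := by
    rw [hψ]
    funext j
    simp only [fourierMode, ofReal_mul, ofReal_ofNat]
  have hmode : ∀ j, fourierMode θ1 j = (-1) ^ j * fourierMode θ0 j := by
    intro j
    split_ifs at hθ1 <;>
      rw [hθ1, mul_comm] <;>
      simp only [sub_eq_add_neg, fourierMode_add, fourierMode_pi, fourierMode_neg_pi]
  have hcos : cos θ1 = -cos θ0 := by
    split_ifs at hθ1 <;> simp only [hθ1, ofReal_sub, ofReal_add, cos_sub_pi, cos_add_pi]
  subst hψ_mode
  exact prolongation_fourierMode_two_mul hP hmode hcos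

/-- Linear prolongation of the coarse-grid mode `ψ(j) = exp(i(2θ⁰)j)` produces the pair of
`2h`-harmonics with coefficients given by the prolongation symbol `(1/2)(1 + cos θ)`:
`I_{2h}^h ψ = (1/2)(1 + cos θ⁰) φ_{θ⁰} + (1/2)(1 + cos θ¹) φ_{θ¹}`. -/
theorem prolongation_of_coarse_mode (θ0 θ1 : ℝ)
    (hθ0 : θ0 ∈ Set.Ioc (-(Real.pi / 2)) (Real.pi / 2))
    (hθ1 : θ1 = if 0 < θ0 then θ0 - Real.pi else θ0 + Real.pi)
    (P : (ℤ → ℂ) → (ℤ → ℂ))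
    (hP : ∀ (v : ℤ → ℂ) (j : ℤ),
      P v (2 * j) = v j ∧ P v (2 * j + 1) = (v j + v (j + 1)) / 2)
    (ψ : ℤ → ℂ) (hψ : ψ = fun j : ℤ => Complex.exp (Complex.I * (2 * θ0) * (j : ℂ))) :
    ∀ j : ℤ, P ψ j = (1 / 2 : ℂ) * (1 + Complex.cos θ0) * fourierMode θ0 j
        + (1 / 2 : ℂ) * (1 + Complex.cos θ1) * fourierMode θ1 j :=
  prolongation_of_coarse_mode_general θ0 θ1 hθ1 P hP ψ hψ
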